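/- Let Γ be a finite group and (K,L) a pair of finite Γ-simplicial complexes (L a Γ-subcomplex of K). Then for every integer r ≥ 2, the pair (Sd^r(K), Sd^r(L)) is a 2^{r-2}-NDR pair. -/

import Mathlib

universe u

/-- An abstract simplicial complex on the vertex type `V`: a family of finite subsets of `V`
closed under taking subsets. -/
structure Cplx (V : Type*) where
  faces : Set (Set V)
  finite_mem : ∀ σ ∈ faces, Set.Finite σ
  down_closed : ∀ σ ∈ faces, ∀ τ ⊆ σ, τ ∈ faces

/-- The vertex set of a simplicial complex. -/
def Cplx.verts {V : Type*} (K : Cplx V) : Set V := {v | ({v} : Set V) ∈ K.faces}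

/-- `a` is an action of the group `Γ` on the vertex type of `K` by simplicial automorphisms. -/
def IsCplxAction (Γ : Type*) [Group Γ] {V : Type*} (a : Γ → V → V) (K : Cplx V) : Prop :=
  (∀ v, a 1 v = v) ∧ (∀ γ γ' : Γ, ∀ v, a (γ * γ') v = a γ (a γ' v)) ∧
    ∀ γ : Γ, ∀ σ ∈ K.faces, (a γ) '' σ ∈ K.faces

/-- A simplicial multi-map from `K` to `L`: it assigns to each vertex of `K` a nonempty subset
of the vertices of `L`, so that `⋃ v ∈ σ, η v` is a simplex of `L` for every simplex `σ` of
`K`. -/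
def IsMultiMap {V W : Type*} (K : Cplx V) (L : Cplx W) (η : V → Set W) : Prop :=
  (∀ v ∈ K.verts, (η v).Nonempty) ∧ ∀ σ ∈ K.faces, (⋃ v ∈ σ, η v) ∈ L.faces

/-- A Γ-equivariant simplicial multi-map, i.e. an element of `Map_Γ(K, L)`. -/
def IsEquivMultiMap (Γ : Type*) [Group Γ] {V W : Type*} (a : Γ → V → V) (b : Γ → W → W)
    (K : Cplx V) (L : Cplx W) (η : V → Set W) : Prop :=
  IsMultiMap K L η ∧ ∀ γ : Γ, ∀ v ∈ K.verts, η (a γ v) = (b γ) '' (η v)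

/-- Pointwise order on multi-maps out of `K` (on the vertices of `K`). -/
def mmLE {V W : Type*} (K : Cplx V) (η η' : V → Set W) : Prop := ∀ v ∈ K.verts, η v ⊆ η' v

/-- An element of `Def_Γ(K, L)`: a Γ-equivariant simplicial multi-map `K → K` with
`η v = {v}` for every vertex `v` of the subcomplex `L`. -/
def IsDefMultiMap (Γ : Type*) [Group Γ] {V : Type*} (a : Γ → V → V) (K L : Cplx V)
    (η : V → Set V) : Prop :=
  IsEquivMultiMap Γ a a K K η ∧ ∀ v ∈ L.verts, η v = {v}

/-- One step of a zigzag in `Def_Γ(K, L)`: both multi-maps lie in `Def_Γ(K, L)` and they are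
comparable. -/
def cplxDefStep (Γ : Type*) [Group Γ] {V : Type*} (a : Γ → V → V) (K L : Cplx V)
    (η η' : V → Set V) : Prop :=
  IsDefMultiMap Γ a K L η ∧ IsDefMultiMap Γ a K L η' ∧ (mmLE K η η' ∨ mmLE K η' η)

/-- The Γ-simplicial complex `K` strongly Γ-collapses to its Γ-subcomplex `L`: there is a
simplicial map `f` belonging to the identity component of `Def_Γ(K, L)` (joined to the
identity by a finite zigzag of pairwise comparable elements) whose image is contained in
`L`. -/
def CplxCollapses (Γ : Type*) [Group Γ] {V : Type*} (a : Γ → V → V) (K L : Cplx V) : Prop :=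
  ∃ f : V → V, IsDefMultiMap Γ a K L (fun v => {f v}) ∧
    Relation.ReflTransGen (cplxDefStep Γ a K L) (fun v => {v}) (fun v => {f v}) ∧
    ∀ σ ∈ K.faces, f '' σ ∈ L.faces
/-- The face poset of `K`, realized as the set of nonempty simplices of `K` inside the poset
`Set V` (ordered by inclusion). -/
def facePoset {V : Type*} (K : Cplx V) : Set (Set V) := {σ | σ ∈ K.faces ∧ σ.Nonempty}

/-- The barycentric subdivision `Sd(K) = Δ(FK)`: the simplicial complex on the nonempty
simplices of `K` whose simplices are the finite chains of the face poset of `K`. -/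
def sd {V : Type*} (K : Cplx V) : Cplx (Set V) where
  faces := {c | c.Finite ∧ (∀ σ ∈ c, σ ∈ facePoset K) ∧ IsChain (· ⊆ ·) c}
  finite_mem := fun _ h => h.1
  down_closed := fun c hc d hdc => by
    exact ⟨hc.1.subset hdc, fun σ hσ => hc.2.1 σ (hdc hσ),
      fun x hx y hy hxy => hc.2.2 (hdc hx) (hdc hy) hxy⟩
/-- The neighborhood `ν_K(L) = ⋃_{v ∈ V(L)} st_K(v)` of the subcomplex `L` in `K`. -/
def nbhd {V : Type*} (K L : Cplx V) : Cplx V where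
  faces := {σ | ∃ v ∈ L.verts, insert v σ ∈ K.faces}
  finite_mem := fun σ h => by
    obtain ⟨v, -, h⟩ := h
    exact (K.finite_mem _ h).subset (Set.subset_insert _ _)
  down_closed := fun σ h τ hτσ => by
    obtain ⟨v, hv, h⟩ := h
    exact ⟨v, hv, K.down_closed _ h _ (Set.insert_subset_insert hτσ)⟩

/-- The iterated neighborhood `ν^r_K(L)` (with `ν^0_K(L) = L`). -/
def nbhdIter {V : Type*} (K L : Cplx V) : ℕ → Cplx V
  | 0 => L
  | r + 1 => nbhd K (nbhdIter K L r)

/-- `(K, L)` is an `r`-NDR pair of Γ-simplicial complexes: there is a Γ-subcomplex `A` of `K`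
containing `ν^r_K(L)` (and `L`) which strongly Γ-collapses to `L`. -/
def IsNDRPair (Γ : Type*) [Group Γ] {V : Type*} (a : Γ → V → V) (K L : Cplx V) (r : ℕ) : Prop :=
  ∃ A : Cplx V, A.faces ⊆ K.faces ∧ L.faces ⊆ A.faces ∧
    (∀ γ : Γ, ∀ σ ∈ A.faces, (a γ) '' σ ∈ A.faces) ∧
    (nbhdIter K L r).faces ⊆ A.faces ∧ CplxCollapses Γ a A L
/-- The vertex type of the `r`-fold barycentric subdivision of a complex on `V`. -/
def IterT (V : Type u) : ℕ → Type u
  | 0 => V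
  | r + 1 => Set (IterT V r)

/-- The iterated barycentric subdivision `Sd^r(K)`. -/
def sdIter {V : Type u} (K : Cplx V) : (r : ℕ) → Cplx (IterT V r)
  | 0 => K
  | r + 1 => sd (sdIter K r)

/-- The action induced on the vertices of the `r`-fold barycentric subdivision. -/
def actIter {Γ : Type*} {V : Type u} (a : Γ → V → V) : (r : ℕ) → Γ → IterT V r → IterT V r
  | 0 => a
  | r + 1 => fun γ σ => (actIter a r γ) '' σ


section Aux

variable {Γ : Type*} [Group Γ]

/-- A group action given purely by functional equations. -/
def GoodAct {W : Type*} (b : Γ → W → W) : Prop :=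
  (∀ v, b 1 v = v) ∧ ∀ γ γ' : Γ, ∀ v, b (γ * γ') v = b γ (b γ' v)

theorem GoodAct.leftInv {W : Type*} {b : Γ → W → W} (hb : GoodAct b) (γ : Γ) (v : W) :
    b γ⁻¹ (b γ v) = v := by
  rw [← hb.2, inv_mul_cancel, hb.1]

theorem GoodAct.injective {W : Type*} {b : Γ → W → W} (hb : GoodAct b) (γ : Γ) :
    Function.Injective (b γ) := by
  intro x y h
  have := congrArg (b γ⁻¹) h
  rwa [hb.leftInv, hb.leftInv] at this

theorem GoodAct.image {W : Type*} {b : Γ → W → W} (hb : GoodAct b) :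
    GoodAct (fun γ (s : Set W) => b γ '' s) := by
  constructor
  · intro s
    simp only [funext (hb.1), Set.image_id']
  · intro γ γ' s
    have : b (γ * γ') = b γ ∘ b γ' := funext (hb.2 γ γ')
    simp only [this, Set.image_comp]

theorem actIter_good {V : Type u} {a : Γ → V → V} (ha : GoodAct a) :
    ∀ r, GoodAct (actIter a r)
  | 0 => ha
  | r + 1 => (actIter_good ha r).image

theorem GoodAct.mem_image_iff {W : Type*} {b : Γ → W → W} (hb : GoodAct b) {γ : Γ}
    {s : Set W} {x : W} : b γ x ∈ b γ '' s ↔ x ∈ s :=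
  ⟨fun h => by rcases h with ⟨y, hy, hxy⟩; rwa [← hb.injective γ hxy], fun h => ⟨x, h, rfl⟩⟩

/-- invariant set: from one-sided invariance get the inverse statement. -/
theorem GoodAct.inv_mem {W : Type*} {b : Γ → W → W} (hb : GoodAct b) {S : Set W}
    (hS : ∀ γ : Γ, ∀ x ∈ S, b γ x ∈ S) {γ : Γ} {x : W} (h : b γ x ∈ S) : x ∈ S := by
  have := hS γ⁻¹ _ h
  rwa [hb.leftInv] at this

theorem GoodAct.image_inter {W : Type*} {b : Γ → W → W} (hb : GoodAct b) (γ : Γ)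
    (s t : Set W) : b γ '' (s ∩ t) = (b γ '' s) ∩ (b γ '' t) :=
  Set.image_inter (hb.injective γ)

end Aux

section ChainCplx

variable {X : Type*}

theorem Cplx.ext' {V : Type*} {K K' : Cplx V} (h : K.faces = K'.faces) : K = K' := by
  cases K; cases K'; simpa using h

/-- The order complex of a family of sets (with the inclusion order). -/
def chainCplx (P : Set (Set X)) : Cplx (Set X) where
  faces := {c | c.Finite ∧ c ⊆ P ∧ IsChain (· ⊆ ·) c}
  finite_mem := fun _ h => h.1
  down_closed := fun c hc d hdc => by
    exact ⟨hc.1.subset hdc, fun σ hσ => hc.2.1 (hdc hσ), fun x hx y hy hxy => hc.2.2 (hdc hx) (hdc hy) hxy⟩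

/-- Nonempty finite chains in `P`. -/
def neChains (P : Set (Set X)) : Set (Set (Set X)) :=
  {c | c.Finite ∧ c.Nonempty ∧ c ⊆ P ∧ IsChain (· ⊆ ·) c}

theorem mem_verts_iff {V : Type*} {K : Cplx V} {v : V} : v ∈ K.verts ↔ {v} ∈ K.faces := Iff.rfl

theorem face_subset_verts {V : Type*} {K : Cplx V} {σ : Set V} (h : σ ∈ K.faces) :
    σ ⊆ K.verts := fun v hv => K.down_closed σ h {v} (by simpa using hv)

theorem chainCplx_verts (P : Set (Set X)) : (chainCplx P).verts = P := by
  ext v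
  constructor
  · intro h
    exact h.2.1 rfl
  · intro h
    exact ⟨Set.finite_singleton v, by simpa using h, Set.Subsingleton.isChain (by simp)⟩

theorem chainCplx_mono {P Q : Set (Set X)} (h : P ⊆ Q) :
    (chainCplx P).faces ⊆ (chainCplx Q).faces :=
  fun _ hc => ⟨hc.1, hc.2.1.trans h, hc.2.2⟩

theorem sd_eq_chainCplx {V : Type*} (K : Cplx V) : sd K = chainCplx (facePoset K) := by
  apply Cplx.ext'
  ext c
  exact Iff.rfl

theorem facePoset_chainCplx (P : Set (Set X)) : facePoset (chainCplx P) = neChains P := by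
  ext c
  constructor
  · rintro ⟨⟨h1, h2, h3⟩, h4⟩
    exact ⟨h1, h4, h2, h3⟩
  · rintro ⟨h1, h2, h3, h4⟩
    exact ⟨⟨h1, h3, h4⟩, h2⟩

theorem sd_chainCplx (P : Set (Set X)) : sd (chainCplx P) = chainCplx (neChains P) := by
  rw [sd_eq_chainCplx, facePoset_chainCplx]

theorem facePoset_mono {V : Type*} {K K' : Cplx V} (h : K.faces ⊆ K'.faces) :
    facePoset K ⊆ facePoset K' := fun _ hσ => ⟨h hσ.1, hσ.2⟩

theorem sd_mono {V : Type*} {K K' : Cplx V} (h : K.faces ⊆ K'.faces) :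
    (sd K).faces ⊆ (sd K').faces :=
  fun _ hc => ⟨hc.1, fun σ hσ => facePoset_mono h (hc.2.1 σ hσ), hc.2.2⟩

theorem sd_verts {V : Type*} (K : Cplx V) : (sd K).verts = facePoset K := by
  rw [sd_eq_chainCplx, chainCplx_verts]

theorem face_subset_vertsL {V : Type*} {L : Cplx V} {σ : Set (Set V)} (h : σ ∈ (sd L).faces) :
    σ ⊆ facePoset L := fun v hv => h.2.1 v hv

theorem sd_faces_finite {V : Type*} {K : Cplx V} (h : K.faces.Finite) :
    (sd K).faces.Finite := by
  have h2 : (sd K).faces ⊆ {c | c ⊆ facePoset K} := fun c hc => fun σ hσ => hc.2.1 σ hσ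
  exact ((h.subset (fun σ hσ => hσ.1)).finite_subsets).subset h2

theorem faces_finite_of_verts {V : Type*} {K : Cplx V} (h : K.verts.Finite) :
    K.faces.Finite := by
  have h2 : K.faces ⊆ {σ | σ ⊆ K.verts} := fun σ hσ => face_subset_verts hσ
  exact h.finite_subsets.subset h2

end ChainCplx

section Collapse

variable {Γ : Type*} [Group Γ] {W : Type*}

theorem biUnion_singleton_eq_self {σ : Set W} : (⋃ v ∈ σ, ({v} : Set W)) = σ := by
  simp

theorem biUnion_singleton_image (f : W → W) (σ : Set W) :
    (⋃ v ∈ σ, ({f v} : Set W)) = f '' σ := by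
  ext x; simp [eq_comm]

theorem isDefMultiMap_id {b : Γ → W → W} {A L : Cplx W} :
    IsDefMultiMap Γ b A L (fun v => {v}) := by
  refine ⟨⟨⟨fun v _ => ⟨v, rfl⟩, fun σ hσ => by rw [biUnion_singleton_eq_self]; exact hσ⟩,
    ?_⟩, fun v _ => rfl⟩
  intro γ v _
  simp

theorem collapse_refl {b : Γ → W → W} {A : Cplx W} : CplxCollapses Γ b A A := by
  refine ⟨id, isDefMultiMap_id, Relation.ReflTransGen.refl, fun σ hσ => by simpa using hσ⟩

theorem IsDefMultiMap.mono_target {b : Γ → W → W} {A B N : Cplx W} {η : W → Set W}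
    (hNB : N.verts ⊆ B.verts) (h : IsDefMultiMap Γ b A B η) : IsDefMultiMap Γ b A N η :=
  ⟨h.1, fun v hv => h.2 v (hNB hv)⟩

theorem verts_mono {B N : Cplx W} (h : N.faces ⊆ B.faces) : N.verts ⊆ B.verts :=
  fun _ hv => h hv

theorem cplxDefStep.mono_target {b : Γ → W → W} {A B N : Cplx W} {η η' : W → Set W}
    (hNB : N.verts ⊆ B.verts) (h : cplxDefStep Γ b A B η η') : cplxDefStep Γ b A N η η' :=
  ⟨h.1.mono_target hNB, h.2.1.mono_target hNB, h.2.2⟩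

theorem collapse_trans {b : Γ → W → W} {A B N : Cplx W} (hBA : B.faces ⊆ A.faces)
    (hNB : N.faces ⊆ B.faces) (h1 : CplxCollapses Γ b A B) (h2 : CplxCollapses Γ b B N) :
    CplxCollapses Γ b A N := by
  obtain ⟨f₁, hf₁def, hf₁z, hf₁im⟩ := h1
  obtain ⟨f₂, hf₂def, hf₂z, hf₂im⟩ := h2
  have hNBv : N.verts ⊆ B.verts := verts_mono hNB
  -- basic facts about f₁
  have hf₁verts : ∀ v ∈ A.verts, f₁ v ∈ B.verts := by
    intro v hv
    have := hf₁im {v} hv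
    rwa [Set.image_singleton] at this
  have hf₁equiv : ∀ γ : Γ, ∀ v ∈ A.verts, f₁ (b γ v) = b γ (f₁ v) := by
    intro γ v hv
    have := hf₁def.1.2 γ v hv
    rw [Set.image_singleton] at this
    exact (Set.singleton_eq_singleton_iff).1 this
  have hf₁fix : ∀ v ∈ B.verts, f₁ v = v := by
    intro v hv
    exact (Set.singleton_eq_singleton_iff).1 (hf₁def.2 v hv)
  -- lifting of multimaps along f₁
  have hlift : ∀ η : W → Set W, IsDefMultiMap Γ b B N η →
      IsDefMultiMap Γ b A N (fun v => η (f₁ v)) := by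
    intro η hη
    refine ⟨⟨⟨fun v hv => hη.1.1.1 _ (hf₁verts v hv), ?_⟩, ?_⟩, ?_⟩
    · intro σ hσ
      have : (⋃ v ∈ σ, η (f₁ v)) = ⋃ w ∈ f₁ '' σ, η w := by
        rw [Set.biUnion_image]
      rw [this]
      exact hBA (hη.1.1.2 _ (hf₁im σ hσ))
    · intro γ v hv
      show η (f₁ (b γ v)) = b γ '' η (f₁ v)
      rw [hf₁equiv γ v hv]
      exact hη.1.2 γ _ (hf₁verts v hv)
    · intro v hv
      show η (f₁ v) = {v}
      rw [hf₁fix v (hNBv hv)]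
      exact hη.2 v hv
  -- lift the second zigzag
  have hz2 : ∀ η η' : W → Set W, Relation.ReflTransGen (cplxDefStep Γ b B N) η η' →
      Relation.ReflTransGen (cplxDefStep Γ b A N)
        (fun v => η (f₁ v)) (fun v => η' (f₁ v)) := by
    intro η η' h
    induction h with
    | refl => exact Relation.ReflTransGen.refl
    | tail _ hstep ih =>
        refine ih.tail ⟨hlift _ hstep.1, hlift _ hstep.2.1, ?_⟩
        rcases hstep.2.2 with hle | hle
        · exact Or.inl (fun v hv => hle _ (hf₁verts v hv))
        · exact Or.inr (fun v hv => hle _ (hf₁verts v hv))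
  have hz1 : Relation.ReflTransGen (cplxDefStep Γ b A N) (fun v => {v}) (fun v => {f₁ v}) :=
    Relation.ReflTransGen.mono (fun η η' (h : cplxDefStep Γ b A B η η') => h.mono_target hNBv) _ _ hf₁z
  refine ⟨f₂ ∘ f₁, hlift _ hf₂def, hz1.trans (hz2 _ _ hf₂z), ?_⟩
  intro σ hσ
  rw [Set.image_comp]
  exact hf₂im _ (hf₁im σ hσ)

end Collapse

section PCsec

variable {Γ : Type*} [Group Γ] {Y : Type*}

/-- The combinatorial data of an equivariant ranked strong collapse of the order complex of `P`
onto the order complex of `R`. -/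
structure PC (Γ : Type*) [Group Γ] {Y : Type*} (e : Γ → Y → Y) (P R : Set (Set Y)) where
  d : Set Y → Set Y
  pi : Set Y → ℕ
  hRP : R ⊆ P
  hfinP : P.Finite
  hdP : ∀ σ ∈ P, σ ∉ R → d σ ∈ P
  hdne : ∀ σ ∈ P, σ ∉ R → d σ ≠ σ
  hdpi : ∀ σ ∈ P, σ ∉ R → d σ ∉ R → pi σ < pi (d σ)
  hcomp : ∀ σ ∈ P, σ ∉ R → ∀ τ ∈ P, (σ ⊆ τ ∨ τ ⊆ σ) → (τ ∉ R → pi σ ≤ pi τ) →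
    (d σ ⊆ τ ∨ τ ⊆ d σ)
  hinj : ∀ σ ∈ P, σ ∉ R → ∀ τ ∈ P, τ ∉ R → (σ ⊆ τ ∨ τ ⊆ σ) → pi σ = pi τ → σ = τ
  hge : GoodAct e
  hPinv : ∀ (γ : Γ), ∀ σ ∈ P, e γ '' σ ∈ P
  hRinv : ∀ (γ : Γ), ∀ σ ∈ R, e γ '' σ ∈ R
  hdinv : ∀ (γ : Γ), ∀ σ ∈ P, σ ∉ R → d (e γ '' σ) = e γ '' (d σ)
  hpinv : ∀ (γ : Γ), ∀ σ ∈ P, σ ∉ R → pi (e γ '' σ) = pi σ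

variable {e : Γ → Y → Y} {P R : Set (Set Y)}

/-- The part of `P` not yet removed at stage `t`. -/
def PC.Pt (pc : PC Γ e P R) (t : ℕ) : Set (Set Y) :=
  R ∪ {σ | σ ∈ P ∧ σ ∉ R ∧ t ≤ pc.pi σ}

theorem PC.Pt_subset (pc : PC Γ e P R) (t : ℕ) : pc.Pt t ⊆ P := by
  rintro σ (h | h)
  exacts [pc.hRP h, h.1]

theorem PC.subset_Pt (pc : PC Γ e P R) (t : ℕ) : R ⊆ pc.Pt t := Set.subset_union_left

theorem PC.Pt_anti (pc : PC Γ e P R) (t : ℕ) : pc.Pt (t + 1) ⊆ pc.Pt t := by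
  rintro σ (h | h)
  · exact Or.inl h
  · exact Or.inr ⟨h.1, h.2.1, le_trans (Nat.le_succ t) h.2.2⟩

theorem PC.mem_R_iff_image (pc : PC Γ e P R) (γ : Γ) {σ : Set Y} :
    e γ '' σ ∈ R ↔ σ ∈ R := by
  constructor
  · intro h
    exact pc.hge.image.inv_mem (fun γ x hx => pc.hRinv γ x hx) h
  · exact pc.hRinv γ σ

theorem PC.mem_P_iff_image (pc : PC Γ e P R) (γ : Γ) {σ : Set Y} :
    e γ '' σ ∈ P ↔ σ ∈ P := by
  constructor
  · intro h
    exact pc.hge.image.inv_mem (fun γ x hx => pc.hPinv γ x hx) h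
  · exact pc.hPinv γ σ

theorem PC.step (pc : PC Γ e P R) (t : ℕ) :
    CplxCollapses Γ (fun γ (s : Set Y) => e γ '' s) (chainCplx (pc.Pt t))
      (chainCplx (pc.Pt (t + 1))) := by
  classical
  set S : Set (Set Y) := {σ | σ ∈ P ∧ σ ∉ R ∧ pc.pi σ = t} with hS
  have hSsub : S ⊆ pc.Pt t := fun σ hσ => Or.inr ⟨hσ.1, hσ.2.1, le_of_eq hσ.2.2.symm⟩
  have hPt1S : ∀ σ ∈ pc.Pt (t + 1), σ ∉ S := by
    rintro σ (h | h) hσS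
    · exact hσS.2.1 h
    · have h1 := h.2.2
      have h2 := hσS.2.2
      omega
  have hdS : ∀ σ ∈ S, pc.d σ ∈ pc.Pt (t + 1) := by
    intro σ hσ
    by_cases hdR : pc.d σ ∈ R
    · exact Or.inl hdR
    · refine Or.inr ⟨pc.hdP σ hσ.1 hσ.2.1, hdR, ?_⟩
      have h1 := pc.hdpi σ hσ.1 hσ.2.1 hdR
      have h2 := hσ.2.2
      omega
  have hPtS : ∀ σ ∈ pc.Pt t, σ ∉ S → σ ∈ pc.Pt (t + 1) := by
    rintro σ (h | h) hσS
    · exact Or.inl h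
    · refine Or.inr ⟨h.1, h.2.1, ?_⟩
      have h1 : ¬ (pc.pi σ = t) := fun hh => hσS ⟨h.1, h.2.1, hh⟩
      have h2 := h.2.2
      omega
  set f : Set Y → Set Y := fun v => if v ∈ S then pc.d v else v with hf
  set η : Set Y → Set (Set Y) := fun v => if v ∈ S then {v, pc.d v} else {v} with hη
  -- the key simplicial fact
  have keyface : ∀ c ∈ (chainCplx (pc.Pt t)).faces,
      c ∪ pc.d '' (c ∩ S) ∈ (chainCplx (pc.Pt t)).faces := by
    rintro c ⟨hcfin, hcsub, hcchain⟩
    have hcP : ∀ τ ∈ c, τ ∈ P := fun τ hτ => pc.Pt_subset t (hcsub hτ)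
    have hccomp : ∀ σ ∈ c, ∀ τ ∈ c, σ ⊆ τ ∨ τ ⊆ σ := by
      intro σ hσ τ hτ
      by_cases hst : σ = τ
      · exact Or.inl (le_of_eq hst)
      · exact hcchain hσ hτ hst
    have hpit : ∀ τ ∈ c, τ ∉ R → t ≤ pc.pi τ := by
      intro τ hτ hτR
      rcases hcsub hτ with h | h
      · exact absurd h hτR
      · exact h.2.2
    have hdc : ∀ σ ∈ c ∩ S, ∀ τ ∈ c, pc.d σ ⊆ τ ∨ τ ⊆ pc.d σ := by
      rintro σ ⟨hσc, hσS⟩ τ hτ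
      refine pc.hcomp σ hσS.1 hσS.2.1 τ (hcP τ hτ) (hccomp σ hσc τ hτ) ?_
      intro hτR
      rw [hσS.2.2]
      exact hpit τ hτ hτR
    have hdd : ∀ σ ∈ c ∩ S, ∀ σ' ∈ c ∩ S, pc.d σ ⊆ pc.d σ' ∨ pc.d σ' ⊆ pc.d σ := by
      rintro σ ⟨hσc, hσS⟩ σ' hσ'
      refine pc.hcomp σ hσS.1 hσS.2.1 (pc.d σ') (pc.hdP σ' hσ'.2.1 hσ'.2.2.1) ?_ ?_
      · rcases hdc σ' hσ' σ hσc with h | h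
        · exact Or.inr h
        · exact Or.inl h
      · intro hdR
        have h1 := pc.hdpi σ' hσ'.2.1 hσ'.2.2.1 hdR
        have h2 := hσS.2.2
        have h3 := hσ'.2.2.2
        omega
    refine ⟨hcfin.union ((hcfin.inter_of_left S).image _), ?_, ?_⟩
    · rintro x (hx | ⟨σ, hσ, rfl⟩)
      · exact hcsub hx
      · exact pc.Pt_anti t (hdS σ hσ.2)
    · rintro x (hx | ⟨σ, hσ, rfl⟩) y (hy | ⟨σ', hσ', rfl⟩) hne
      · exact hcchain hx hy hne
      · rcases hdc σ' hσ' x hx with h | h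
        exacts [Or.inr h, Or.inl h]
      · exact hdc σ hσ y hy
      · rcases hdd σ hσ σ' hσ' with h | h
        exacts [Or.inl h, Or.inr h]
  -- image of a face under f
  have himsub : ∀ c : Set (Set Y), f '' c ⊆ c ∪ pc.d '' (c ∩ S) := by
    intro c x hx
    rcases hx with ⟨v, hv, rfl⟩
    by_cases hvS : v ∈ S
    · right
      exact ⟨v, ⟨hv, hvS⟩, by simp [hf, hvS]⟩
    · left
      simpa [hf, hvS] using hv
  have hfim : ∀ c ∈ (chainCplx (pc.Pt t)).faces, f '' c ∈ (chainCplx (pc.Pt (t + 1))).faces := by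
    intro c hc
    have hU := keyface c hc
    refine ⟨hc.1.image f, ?_, ?_⟩
    · rintro x ⟨v, hv, rfl⟩
      by_cases hvS : v ∈ S
      · rw [hf]
        simp only [if_pos hvS]
        exact hdS v hvS
      · rw [hf]
        simp only [if_neg hvS]
        exact hPtS v (hc.2.1 hv) hvS
    · intro x hx y hy hne
      exact hU.2.2 (himsub c hx) (himsub c hy) hne
  -- S is invariant, f and η are equivariant
  have hSinv : ∀ (γ : Γ) (v : Set Y), e γ '' v ∈ S ↔ v ∈ S := by
    intro γ v
    constructor
    · rintro ⟨h1, h2, h3⟩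
      have hvP : v ∈ P := (pc.mem_P_iff_image γ).1 h1
      have hvR : v ∉ R := fun hh => h2 (pc.hRinv γ v hh)
      refine ⟨hvP, hvR, ?_⟩
      rwa [pc.hpinv γ v hvP hvR] at h3
    · rintro ⟨h1, h2, h3⟩
      exact ⟨pc.hPinv γ v h1, fun hh => h2 ((pc.mem_R_iff_image γ).1 hh),
        by rwa [pc.hpinv γ v h1 h2]⟩
  have hηequiv : ∀ (γ : Γ) (v : Set Y), η (e γ '' v) = (fun s => e γ '' s) '' (η v) := by
    intro γ v
    by_cases hvS : v ∈ S
    · rw [hη]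
      simp only [if_pos hvS, if_pos ((hSinv γ v).2 hvS)]
      rw [pc.hdinv γ v hvS.1 hvS.2.1, Set.image_pair]
    · rw [hη]
      simp only [if_pos, if_neg hvS, if_neg (fun hh => hvS ((hSinv γ v).1 hh)),
        Set.image_singleton]
  have hfequiv : ∀ (γ : Γ) (v : Set Y), f (e γ '' v) = e γ '' (f v) := by
    intro γ v
    by_cases hvS : v ∈ S
    · rw [hf]
      simp only [if_pos hvS, if_pos ((hSinv γ v).2 hvS)]
      exact pc.hdinv γ v hvS.1 hvS.2.1
    · rw [hf]
      simp only [if_neg hvS, if_neg (fun hh => hvS ((hSinv γ v).1 hh))]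
  -- the three multimaps are Def multimaps
  have hvertsPt : (chainCplx (pc.Pt t)).verts = pc.Pt t := chainCplx_verts _
  have hvertsPt1 : (chainCplx (pc.Pt (t + 1))).verts = pc.Pt (t + 1) := chainCplx_verts _
  have hηU : ∀ c : Set (Set Y), (⋃ v ∈ c, η v) = c ∪ pc.d '' (c ∩ S) := by
    intro c
    ext x
    simp only [Set.mem_iUnion, Set.mem_union, Set.mem_image, Set.mem_inter_iff, hη]
    constructor
    · rintro ⟨v, hv, hx⟩
      by_cases hvS : v ∈ S
      · rw [if_pos hvS] at hx
        rcases hx with rfl | rfl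
        · exact Or.inl hv
        · exact Or.inr ⟨v, ⟨hv, hvS⟩, rfl⟩
      · rw [if_neg hvS] at hx
        rcases hx with rfl
        exact Or.inl hv
    · rintro (hx | ⟨v, ⟨hv, hvS⟩, rfl⟩)
      · refine ⟨x, hx, ?_⟩
        by_cases hxS : x ∈ S
        · rw [if_pos hxS]; exact Or.inl rfl
        · rw [if_neg hxS]; rfl
      · refine ⟨v, hv, ?_⟩
        rw [if_pos hvS]
        exact Or.inr rfl
  have hηdef : IsDefMultiMap Γ (fun γ (s : Set Y) => e γ '' s) (chainCplx (pc.Pt t))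
      (chainCplx (pc.Pt (t + 1))) η := by
    refine ⟨⟨⟨?_, ?_⟩, ?_⟩, ?_⟩
    · intro v _
      by_cases hvS : v ∈ S
      · exact ⟨v, by simp [hη, hvS]⟩
      · exact ⟨v, by simp [hη, hvS]⟩
    · intro c hc
      rw [hηU c]
      exact keyface c hc
    · intro γ v _
      exact hηequiv γ v
    · intro v hv
      rw [hvertsPt1] at hv
      have := hPt1S v hv
      simp [hη, this]
  have hfdef : IsDefMultiMap Γ (fun γ (s : Set Y) => e γ '' s) (chainCplx (pc.Pt t))
      (chainCplx (pc.Pt (t + 1))) (fun v => {f v}) := by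
    refine ⟨⟨⟨fun v _ => ⟨f v, rfl⟩, ?_⟩, ?_⟩, ?_⟩
    · intro c hc
      rw [biUnion_singleton_image]
      exact chainCplx_mono (pc.Pt_anti t) (hfim c hc)
    · intro γ v _
      show ({f (e γ '' v)} : Set (Set Y)) = (fun s => e γ '' s) '' {f v}
      rw [hfequiv γ v, Set.image_singleton]
    · intro v hv
      rw [hvertsPt1] at hv
      show ({f v} : Set (Set Y)) = {v}
      have := hPt1S v hv
      simp [hf, this]
  have hiddef : IsDefMultiMap Γ (fun γ (s : Set Y) => e γ '' s) (chainCplx (pc.Pt t))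
      (chainCplx (pc.Pt (t + 1))) (fun v => {v}) := isDefMultiMap_id
  refine ⟨f, hfdef, ?_, fun c hc => hfim c hc⟩
  have step1 : cplxDefStep Γ (fun γ (s : Set Y) => e γ '' s) (chainCplx (pc.Pt t))
      (chainCplx (pc.Pt (t + 1))) (fun v => {v}) η := by
    refine ⟨hiddef, hηdef, Or.inl ?_⟩
    intro v _ x hx
    simp only [Set.mem_singleton_iff] at hx
    rw [hx]
    by_cases hvS : v ∈ S <;> simp [hη, hvS]
  have step2 : cplxDefStep Γ (fun γ (s : Set Y) => e γ '' s) (chainCplx (pc.Pt t))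
      (chainCplx (pc.Pt (t + 1))) η (fun v => {f v}) := by
    refine ⟨hηdef, hfdef, Or.inr ?_⟩
    intro v _ x hx
    simp only [Set.mem_singleton_iff] at hx
    rw [hx]
    by_cases hvS : v ∈ S <;> simp [hη, hf, hvS]
  exact (Relation.ReflTransGen.refl.tail step1).tail step2

theorem PC.collapse (pc : PC Γ e P R) :
    CplxCollapses Γ (fun γ (s : Set Y) => e γ '' s) (chainCplx P) (chainCplx R) := by
  obtain ⟨M, hM⟩ : ∃ M, ∀ σ ∈ P, pc.pi σ ≤ M := by
    rcases (pc.hfinP.image pc.pi).bddAbove with ⟨M, hM⟩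
    exact ⟨M, fun σ hσ => hM ⟨σ, hσ, rfl⟩⟩
  have aux : ∀ n t, (∀ σ ∈ P, σ ∉ R → pc.pi σ < t + n) →
      CplxCollapses Γ (fun γ (s : Set Y) => e γ '' s) (chainCplx (pc.Pt t)) (chainCplx R) := by
    intro n
    induction n with
    | zero =>
        intro t ht
        have : pc.Pt t = R := by
          apply Set.Subset.antisymm
          · rintro σ (h | h)
            · exact h
            · exfalso
              have h1 := ht σ h.1 h.2.1
              have h2 := h.2.2
              omega
          · exact pc.subset_Pt t
        rw [this]
        exact collapse_refl
    | succ n ih =>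
        intro t ht
        refine collapse_trans (chainCplx_mono (pc.Pt_anti t))
          (chainCplx_mono (pc.subset_Pt (t + 1))) (pc.step t) (ih (t + 1) ?_)
        intro σ hσ hσR
        have := ht σ hσ hσR
        omega
  have hP0 : pc.Pt 0 = P := by
    apply Set.Subset.antisymm (pc.Pt_subset 0)
    intro σ hσ
    by_cases hσR : σ ∈ R
    · exact Or.inl hσR
    · exact Or.inr ⟨hσ, hσR, Nat.zero_le _⟩
  rw [← hP0]
  exact aux (M + 1) 0 (fun σ hσ _ => by have := hM σ hσ; omega)

end PCsec

namespace PC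

variable {Γ : Type*} [Group Γ] {Y : Type*} {e : Γ → Y → Y} {P R : Set (Set Y)}

/-- The minimal rank of a "bad" element of a chain. -/
noncomputable def tv (pc : PC Γ e P R) (c : Set (Set Y)) : ℕ :=
  sInf (pc.pi '' (c ∩ (P \ R)))

theorem exists_wv (pc : PC Γ e P R) {c : Set (Set Y)} (h : (c ∩ (P \ R)).Nonempty) :
    ∃ σ, σ ∈ c ∩ (P \ R) ∧ pc.pi σ = pc.tv c := by
  have h2 : (pc.pi '' (c ∩ (P \ R))).Nonempty := h.image _
  obtain ⟨σ, hσ, hpi⟩ := Nat.sInf_mem h2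
  exact ⟨σ, hσ, hpi⟩

open Classical in
/-- The minimal-rank bad element of a chain. -/
noncomputable def wv (pc : PC Γ e P R) (c : Set (Set Y)) : Set Y :=
  if h : ∃ σ, σ ∈ c ∩ (P \ R) ∧ pc.pi σ = pc.tv c then Classical.choose h else ∅

theorem wv_spec (pc : PC Γ e P R) {c : Set (Set Y)} (h : (c ∩ (P \ R)).Nonempty) :
    pc.wv c ∈ c ∩ (P \ R) ∧ pc.pi (pc.wv c) = pc.tv c := by
  rw [wv]
  rw [dif_pos (pc.exists_wv h)]
  exact Classical.choose_spec (pc.exists_wv h)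

theorem tv_le (pc : PC Γ e P R) {c : Set (Set Y)} {σ : Set Y} (h : σ ∈ c ∩ (P \ R)) :
    pc.tv c ≤ pc.pi σ := Nat.sInf_le ⟨σ, h, rfl⟩

theorem nonempty_badpart {c : Set (Set Y)} (hc : c ⊆ P) (hnR : ¬ c ⊆ R) :
    (c ∩ (P \ R)).Nonempty := by
  rw [Set.not_subset] at hnR
  obtain ⟨σ, hσc, hσR⟩ := hnR
  exact ⟨σ, hσc, hc hσc, hσR⟩

theorem chain_comp {c : Set (Set Y)} (hchain : IsChain (· ⊆ ·) c) {σ τ : Set Y}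
    (hσ : σ ∈ c) (hτ : τ ∈ c) : σ ⊆ τ ∨ τ ⊆ σ := by
  by_cases h : σ = τ
  · exact Or.inl (le_of_eq h)
  · exact hchain hσ hτ h

theorem wv_uniq (pc : PC Γ e P R) {c : Set (Set Y)} (hchain : IsChain (· ⊆ ·) c)
    (h : (c ∩ (P \ R)).Nonempty) {σ : Set Y} (hσc : σ ∈ c) (hσP : σ ∈ P) (hσR : σ ∉ R)
    (hpi : pc.pi σ = pc.tv c) : σ = pc.wv c := by
  obtain ⟨⟨hwc, hwP, hwR⟩, hwpi⟩ := pc.wv_spec h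
  exact pc.hinj σ hσP hσR (pc.wv c) hwP hwR (chain_comp hchain hσc hwc) (hpi.trans hwpi.symm)

/-- The induced collapse data on barycentric subdivisions. -/
noncomputable def sd (pc : PC Γ e P R) :
    PC Γ (fun γ (s : Set Y) => e γ '' s) (neChains P) (neChains R) := by
  classical
  set b : Γ → Set Y → Set Y := fun γ s => e γ '' s with hb
  set m₀ : ℕ := P.ncard with hm₀
  set C : ℕ := 2 * m₀ + 2 with hC
  -- basic facts
  have hBadc : ∀ c, c ∈ neChains P → c ∉ neChains R → ¬ c ⊆ R := by
    intro c hc hcR hsub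
    exact hcR ⟨hc.1, hc.2.1, hsub, hc.2.2.2⟩
  have hnotR : ∀ c, ¬ c ⊆ R → c ∉ neChains R := by
    intro c h hc
    exact h hc.2.2.1
  have hne : ∀ c, c ∈ neChains P → ¬ c ⊆ R → (c ∩ (P \ R)).Nonempty := by
    intro c hc h
    exact nonempty_badpart hc.2.2.1 h
  have hcard : ∀ c, c ∈ neChains P → c.ncard ≤ m₀ := by
    intro c hc
    exact Set.ncard_le_ncard hc.2.2.1 pc.hfinP
  have key : ∀ c, c ∈ neChains P → ¬ c ⊆ R →
      pc.wv c ∈ c ∧ pc.wv c ∈ P ∧ pc.wv c ∉ R ∧ pc.pi (pc.wv c) = pc.tv c := by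
    intro c hc h
    obtain ⟨⟨h1, h2, h3⟩, h4⟩ := pc.wv_spec (hne c hc h)
    exact ⟨h1, h2, h3, h4⟩
  have htv_ge : ∀ c : Set (Set Y), (c ∩ (P \ R)).Nonempty → ∀ t : ℕ,
      (∀ σ ∈ c ∩ (P \ R), t ≤ pc.pi σ) → t ≤ pc.tv c := by
    intro c hne' t ht
    obtain ⟨σ, hσ, hpi⟩ := pc.exists_wv hne'
    rw [← hpi]
    exact ht σ hσ
  have hcmp : ∀ c, c ∈ neChains P → ¬ c ⊆ R → ∀ τ ∈ c,
      pc.d (pc.wv c) ⊆ τ ∨ τ ⊆ pc.d (pc.wv c) := by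
    intro c hc h τ hτ
    obtain ⟨hw1, hw2, hw3, hw4⟩ := key c hc h
    refine pc.hcomp _ hw2 hw3 τ (hc.2.2.1 hτ) (chain_comp hc.2.2.2 hw1 hτ) ?_
    intro hτR
    rw [hw4]
    exact pc.tv_le ⟨hτ, hc.2.2.1 hτ, hτR⟩
  -- the two candidate images are nonempty finite chains
  have hdiffP : ∀ c, c ∈ neChains P → ¬ c ⊆ R → pc.d (pc.wv c) ∈ c →
      c \ {pc.wv c} ∈ neChains P := by
    intro c hc h hd
    obtain ⟨hw1, hw2, hw3, hw4⟩ := key c hc h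
    have hdwne : pc.d (pc.wv c) ≠ pc.wv c := pc.hdne _ hw2 hw3
    exact ⟨hc.1.subset Set.diff_subset, ⟨pc.d (pc.wv c), hd, hdwne⟩,
      Set.diff_subset.trans hc.2.2.1, hc.2.2.2.mono Set.diff_subset⟩
  have hinsP : ∀ c, c ∈ neChains P → ¬ c ⊆ R →
      insert (pc.d (pc.wv c)) c ∈ neChains P := by
    intro c hc h
    obtain ⟨hw1, hw2, hw3, hw4⟩ := key c hc h
    refine ⟨hc.1.insert _, ⟨pc.d (pc.wv c), Set.mem_insert _ _⟩, ?_, hc.2.2.2.insert ?_⟩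
    · rw [Set.insert_subset_iff]
      exact ⟨pc.hdP _ hw2 hw3, hc.2.2.1⟩
    · intro τ hτ _
      exact hcmp c hc h τ hτ
  -- rank of the insert
  have htv_ins : ∀ c, c ∈ neChains P → ¬ c ⊆ R →
      pc.tv (insert (pc.d (pc.wv c)) c) = pc.tv c := by
    intro c hc h
    obtain ⟨hw1, hw2, hw3, hw4⟩ := key c hc h
    apply le_antisymm
    · rw [← hw4]
      exact pc.tv_le ⟨Set.mem_insert_of_mem _ hw1, hw2, hw3⟩
    · refine htv_ge _ ⟨pc.wv c, Set.mem_insert_of_mem _ hw1, hw2, hw3⟩ _ ?_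
      rintro σ ⟨hσc, hσP, hσR⟩
      rcases hσc with rfl | hσc
      · have := pc.hdpi _ hw2 hw3 hσR
        omega
      · exact pc.tv_le ⟨hσc, hσP, hσR⟩
  have hwv_ins : ∀ c, c ∈ neChains P → ¬ c ⊆ R → pc.d (pc.wv c) ∉ c →
      pc.wv (insert (pc.d (pc.wv c)) c) = pc.wv c := by
    intro c hc h _
    obtain ⟨hw1, hw2, hw3, hw4⟩ := key c hc h
    refine (pc.wv_uniq (hinsP c hc h).2.2.2 ⟨pc.wv c, Set.mem_insert_of_mem _ hw1, hw2, hw3⟩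
      (Set.mem_insert_of_mem _ hw1) hw2 hw3 ?_).symm
    rw [hw4, htv_ins c hc h]
  -- arithmetic helpers
  have arith1 : ∀ s t u : ℕ, s ≤ 2 * m₀ + 1 → t < u → t * C + s < u * C := by
    intro s t u hs htu
    calc t * C + s < t * C + C := by omega
    _ = (t + 1) * C := by ring
    _ ≤ u * C := Nat.mul_le_mul_right _ (by omega)
  have hsmall : ∀ c, c ∈ neChains P →
      (if pc.d (pc.wv c) ∈ c then m₀ + 1 + c.ncard else m₀ - c.ncard) ≤ 2 * m₀ + 1 := by
    intro c hc
    have := hcard c hc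
    split <;> omega
  -- if the new ranks compare, then the tv's compare
  have harith2 : ∀ t t' s s' : ℕ, s' ≤ 2 * m₀ + 1 → t * C + s ≤ t' * C + s' → t ≤ t' := by
    intro t t' s s' hs' hle
    by_contra hlt
    have h2 := arith1 s' t' t hs' (by omega)
    have h1 : t * C ≤ t * C + s := Nat.le_add_right _ _
    omega
  -- equivariance helpers
  have hPim : ∀ (γ : Γ) (c : Set (Set Y)), c ∈ neChains P → b γ '' c ∈ neChains P := by
    intro γ c hc
    refine ⟨hc.1.image _, hc.2.1.image _, ?_, ?_⟩
    · rintro x ⟨σ, hσ, rfl⟩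
      exact pc.hPinv γ σ (hc.2.2.1 hσ)
    · rintro x ⟨σ, hσ, rfl⟩ y ⟨τ, hτ, rfl⟩ hne2
      have hστ : σ ≠ τ := fun hh => hne2 (by rw [hh])
      rcases hc.2.2.2 hσ hτ hστ with hle | hle
      · exact Or.inl (Set.image_mono hle)
      · exact Or.inr (Set.image_mono hle)
  have hbadim : ∀ (γ : Γ) (c : Set (Set Y)), ¬ c ⊆ R → ¬ (b γ '' c) ⊆ R := by
    intro γ c h hh
    rw [Set.not_subset] at h
    obtain ⟨σ, hσc, hσR⟩ := h
    exact hσR ((pc.mem_R_iff_image γ).1 (hh ⟨σ, hσc, rfl⟩))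
  have himbad : ∀ (γ : Γ) (c : Set (Set Y)), (b γ '' c) ∩ (P \ R) = b γ '' (c ∩ (P \ R)) := by
    intro γ c
    ext x
    constructor
    · rintro ⟨⟨σ, hσ, rfl⟩, hP2, hR2⟩
      exact ⟨σ, ⟨hσ, (pc.mem_P_iff_image γ).1 hP2, fun hh => hR2 (pc.hRinv γ _ hh)⟩, rfl⟩
    · rintro ⟨σ, ⟨hσ, hP2, hR2⟩, rfl⟩
      exact ⟨⟨σ, hσ, rfl⟩, pc.hPinv γ _ hP2, fun hh => hR2 ((pc.mem_R_iff_image γ).1 hh)⟩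
  have htvim : ∀ (γ : Γ) (c : Set (Set Y)), pc.tv (b γ '' c) = pc.tv c := by
    intro γ c
    rw [tv, tv, himbad, Set.image_image]
    congr 1
    exact Set.image_congr (fun σ hσ => pc.hpinv γ σ hσ.2.1 hσ.2.2)
  have hwvim : ∀ (γ : Γ) (c : Set (Set Y)), c ∈ neChains P → ¬ c ⊆ R →
      pc.wv (b γ '' c) = e γ '' (pc.wv c) := by
    intro γ c hc h
    obtain ⟨hw1, hw2, hw3, hw4⟩ := key c hc h
    refine (pc.wv_uniq (hPim γ c hc).2.2.2 (hne _ (hPim γ c hc) (hbadim γ c h))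
      ⟨pc.wv c, hw1, rfl⟩ (pc.hPinv γ _ hw2) (fun hh => hw3 ((pc.mem_R_iff_image γ).1 hh))
      ?_).symm
    rw [pc.hpinv γ _ hw2 hw3, hw4, htvim]
  have hmemim : ∀ (γ : Γ) (c : Set (Set Y)) (x : Set Y), e γ '' x ∈ b γ '' c ↔ x ∈ c := by
    intro γ c x
    exact GoodAct.mem_image_iff pc.hge.image
  refine
    { d := fun c => if pc.d (pc.wv c) ∈ c then c \ {pc.wv c} else insert (pc.d (pc.wv c)) c
      pi := fun c => pc.tv c * C + (if pc.d (pc.wv c) ∈ c then m₀ + 1 + c.ncard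
        else m₀ - c.ncard)
      hRP := fun c hc => ⟨hc.1, hc.2.1, hc.2.2.1.trans pc.hRP, hc.2.2.2⟩
      hfinP := pc.hfinP.finite_subsets.subset (fun c hc => hc.2.2.1)
      hge := pc.hge.image
      hdP := ?_
      hdne := ?_
      hdpi := ?_
      hcomp := ?_
      hinj := ?_
      hPinv := ?_
      hRinv := ?_
      hdinv := ?_
      hpinv := ?_ }
  -- hdP
  · intro c hc hcR
    have h := hBadc c hc hcR
    by_cases hd : pc.d (pc.wv c) ∈ c
    · simpa only [if_pos hd] using hdiffP c hc h hd
    · simpa only [if_neg hd] using hinsP c hc h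
  -- hdne
  · intro c hc hcR
    have h := hBadc c hc hcR
    obtain ⟨hw1, hw2, hw3, hw4⟩ := key c hc h
    by_cases hd : pc.d (pc.wv c) ∈ c
    · simp only [if_pos hd]
      intro heq
      have : pc.wv c ∈ c \ {pc.wv c} := heq.symm ▸ hw1
      exact this.2 rfl
    · simp only [if_neg hd]
      intro heq
      have hmm := Set.mem_insert (pc.d (pc.wv c)) c
      rw [heq] at hmm
      exact hd hmm
  -- hdpi
  · intro c hc hcR hdR
    have h := hBadc c hc hcR
    obtain ⟨hw1, hw2, hw3, hw4⟩ := key c hc h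
    by_cases hd : pc.d (pc.wv c) ∈ c
    · -- phase 2 : the new chain has strictly bigger tv
      simp only [if_pos hd] at hdR ⊢
      have hdcP := hdiffP c hc h hd
      have hnR' : ¬ (c \ {pc.wv c}) ⊆ R := hBadc _ hdcP hdR
      have hne2 := hne _ hdcP hnR'
      have htgt : pc.tv c < pc.tv (c \ {pc.wv c}) := by
        have hstep : ∀ σ ∈ (c \ {pc.wv c}) ∩ (P \ R), pc.tv c + 1 ≤ pc.pi σ := by
          rintro σ ⟨⟨hσc, hσw⟩, hσP, hσR⟩
          have h1 : pc.tv c ≤ pc.pi σ := pc.tv_le ⟨hσc, hσP, hσR⟩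
          rcases Nat.lt_or_ge (pc.tv c) (pc.pi σ) with h2 | h2
          · omega
          · exact absurd (pc.wv_uniq hc.2.2.2 (hne c hc h) hσc hσP hσR (le_antisymm h2 h1))
              hσw
        have := htv_ge _ hne2 _ hstep
        omega
      have h1 : m₀ + 1 + c.ncard ≤ 2 * m₀ + 1 := by
        have := hcard c hc
        omega
      have h2 := arith1 _ _ _ h1 htgt
      have h3 : pc.tv (c \ {pc.wv c}) * C ≤ pc.tv (c \ {pc.wv c}) * C +
          (if pc.d (pc.wv (c \ {pc.wv c})) ∈ c \ {pc.wv c}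
            then m₀ + 1 + (c \ {pc.wv c}).ncard else m₀ - (c \ {pc.wv c}).ncard) :=
        Nat.le_add_right _ _
      omega
    · -- phase 1 : the new chain has the same tv but bigger phase
      simp only [if_neg hd]
      have hkey := hwv_ins c hc h hd
      have hdins : pc.d (pc.wv (insert (pc.d (pc.wv c)) c)) ∈ insert (pc.d (pc.wv c)) c := by
        rw [hkey]
        exact Set.mem_insert _ _
      rw [if_pos hdins, htv_ins c hc h]
      have := hcard c hc
      omega
  -- hcomp
  · intro c hc hcR c' hc' hsub hpi
    have h := hBadc c hc hcR
    obtain ⟨hw1, hw2, hw3, hw4⟩ := key c hc h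
    by_cases hd : pc.d (pc.wv c) ∈ c
    · -- phase 2
      simp only [if_pos hd] at hpi ⊢
      rcases hsub with hcc' | hc'c
      · exact Or.inl (Set.diff_subset.trans hcc')
      · by_cases hwc' : pc.wv c ∈ c'
        · -- then c' is bad, has the same tv and wv, and must be phase 2 of size ≥ |c|
          have hbad' : ¬ c' ⊆ R := fun hh => hw3 (hh hwc')
          have hpi2 := hpi (hnotR c' hbad')
          have hne'c := hne c' hc' hbad'
          have htv1 : pc.tv c' ≤ pc.tv c := by
            rw [← hw4]
            exact pc.tv_le ⟨hwc', hw2, hw3⟩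
          have htv2 : pc.tv c ≤ pc.tv c' :=
            htv_ge _ hne'c _ (fun σ hσ => pc.tv_le ⟨hc'c hσ.1, hσ.2⟩)
          have htv : pc.tv c' = pc.tv c := le_antisymm htv1 htv2
          have hwv' : pc.wv c' = pc.wv c :=
            (pc.wv_uniq hc'.2.2.2 hne'c hwc' hw2 hw3 (by rw [hw4, htv])).symm
          rw [hwv', htv] at hpi2
          by_cases hd' : pc.d (pc.wv c) ∈ c'
          · rw [if_pos hd'] at hpi2
            have hsz : c.ncard ≤ c'.ncard := by omega
            have heq : c' = c := Set.eq_of_subset_of_ncard_le hc'c hsz hc.1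
            rw [heq]
            exact Or.inl Set.diff_subset
          · exfalso
            rw [if_neg hd'] at hpi2
            have h1 := hcard c' hc'
            omega
        · exact Or.inr (fun x hx => ⟨hc'c hx, fun hh => hwc' (hh ▸ hx)⟩)
    · -- phase 1
      simp only [if_neg hd] at hpi ⊢
      rcases hsub with hcc' | hc'c
      · have hbad' : ¬ c' ⊆ R := fun hh => hw3 (hh (hcc' hw1))
        have hpi2 := hpi (hnotR c' hbad')
        have hne'c := hne c' hc' hbad'
        have htv1 : pc.tv c' ≤ pc.tv c := by
          rw [← hw4]
          exact pc.tv_le ⟨hcc' hw1, hw2, hw3⟩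
        have htv2 : pc.tv c ≤ pc.tv c' := harith2 _ _ _ _ (hsmall c' hc') hpi2
        have htv : pc.tv c' = pc.tv c := le_antisymm htv1 htv2
        have hwv' : pc.wv c' = pc.wv c :=
          (pc.wv_uniq hc'.2.2.2 hne'c (hcc' hw1) hw2 hw3 (by rw [hw4, htv])).symm
        by_cases hd' : pc.d (pc.wv c) ∈ c'
        · exact Or.inl (Set.insert_subset hd' hcc')
        · rw [hwv', if_neg hd', htv] at hpi2
          have h1 := hcard c hc
          have h2 := hcard c' hc'
          have h3 : c.ncard ≤ c'.ncard := Set.ncard_le_ncard hcc' hc'.1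
          have h4 : c'.ncard ≤ c.ncard := by omega
          have heq : c = c' := Set.eq_of_subset_of_ncard_le hcc' h4 hc'.1
          refine Or.inr ?_
          rw [← heq]
          exact Set.subset_insert _ _
      · exact Or.inr (hc'c.trans (Set.subset_insert _ _))
  -- hinj
  · intro c hc hcR c' hc' hc'R hsub hpis
    have main : ∀ a a' : Set (Set Y), a ∈ neChains P → ¬ a ⊆ R → a' ∈ neChains P →
        ¬ a' ⊆ R → a ⊆ a' →
        pc.tv a * C + (if pc.d (pc.wv a) ∈ a then m₀ + 1 + a.ncard else m₀ - a.ncard) =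
          pc.tv a' * C +
            (if pc.d (pc.wv a') ∈ a' then m₀ + 1 + a'.ncard else m₀ - a'.ncard) →
        a = a' := by
      intro a a' ha haR ha' ha'R hsub2 hpis2
      obtain ⟨hw1, hw2, hw3, hw4⟩ := key a ha haR
      have hne'a := hne a' ha' ha'R
      have htv1 : pc.tv a' ≤ pc.tv a := by
        rw [← hw4]
        exact pc.tv_le ⟨hsub2 hw1, hw2, hw3⟩
      have htv2 : pc.tv a ≤ pc.tv a' := harith2 _ _ _ _ (hsmall a' ha') (le_of_eq hpis2)
      have htv : pc.tv a' = pc.tv a := le_antisymm htv1 htv2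
      have hwv' : pc.wv a' = pc.wv a :=
        (pc.wv_uniq ha'.2.2.2 hne'a (hsub2 hw1) hw2 hw3 (by rw [hw4, htv])).symm
      rw [hwv', htv] at hpis2
      have h1 := hcard a ha
      have h2 := hcard a' ha'
      have h3 : a.ncard ≤ a'.ncard := Set.ncard_le_ncard hsub2 ha'.1
      by_cases hda : pc.d (pc.wv a) ∈ a <;> by_cases hda' : pc.d (pc.wv a) ∈ a'
      · rw [if_pos hda, if_pos hda'] at hpis2
        exact Set.eq_of_subset_of_ncard_le hsub2 (by omega) ha'.1
      · rw [if_pos hda, if_neg hda'] at hpis2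
        exact absurd hpis2 (by omega)
      · rw [if_neg hda, if_pos hda'] at hpis2
        exact absurd hpis2 (by omega)
      · rw [if_neg hda, if_neg hda'] at hpis2
        exact Set.eq_of_subset_of_ncard_le hsub2 (by omega) ha'.1
    rcases hsub with h1 | h1
    · exact main c c' hc (hBadc c hc hcR) hc' (hBadc c' hc' hc'R) h1 hpis
    · exact (main c' c hc' (hBadc c' hc' hc'R) hc (hBadc c hc hcR) h1 hpis.symm).symm
  -- hPinv
  · intro γ c hc
    exact hPim γ c hc
  -- hRinv
  · intro γ c hc
    refine ⟨hc.1.image _, hc.2.1.image _, ?_, ?_⟩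
    · rintro x ⟨σ, hσ, rfl⟩
      exact pc.hRinv γ σ (hc.2.2.1 hσ)
    · rintro x ⟨σ, hσ, rfl⟩ y ⟨τ, hτ, rfl⟩ hne2
      have hστ : σ ≠ τ := fun hh => hne2 (by rw [hh])
      rcases hc.2.2.2 hσ hτ hστ with hle | hle
      · exact Or.inl (Set.image_mono hle)
      · exact Or.inr (Set.image_mono hle)
  -- hdinv
  · intro γ c hc hcR
    have h := hBadc c hc hcR
    obtain ⟨hw1, hw2, hw3, hw4⟩ := key c hc h
    have himw : pc.wv (b γ '' c) = e γ '' pc.wv c := hwvim γ c hc h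
    have hdiw : pc.d (pc.wv (b γ '' c)) = e γ '' pc.d (pc.wv c) := by
      rw [himw, pc.hdinv γ _ hw2 hw3]
    have hinj2 : Function.Injective (b γ) := GoodAct.injective pc.hge.image γ
    beta_reduce
    by_cases hdc : pc.d (pc.wv c) ∈ c
    · rw [himw, pc.hdinv γ _ hw2 hw3]
      rw [if_pos ((hmemim γ c _).2 hdc), if_pos hdc]
      rw [Set.image_diff hinj2, Set.image_singleton]
    · rw [himw, pc.hdinv γ _ hw2 hw3]
      rw [if_neg (fun hh => hdc ((hmemim γ c _).1 hh)), if_neg hdc]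
      rw [Set.image_insert_eq]
  -- hpinv
  · intro γ c hc hcR
    have h := hBadc c hc hcR
    obtain ⟨hw1, hw2, hw3, hw4⟩ := key c hc h
    have himw : pc.wv (b γ '' c) = e γ '' pc.wv c := hwvim γ c hc h
    have hdiw : pc.d (pc.wv (b γ '' c)) = e γ '' pc.d (pc.wv c) := by
      rw [himw, pc.hdinv γ _ hw2 hw3]
    have hnc : (b γ '' c).ncard = c.ncard :=
      Set.ncard_image_of_injective _ (GoodAct.injective pc.hge.image γ)
    beta_reduce
    by_cases hdc : pc.d (pc.wv c) ∈ c
    · rw [htvim, himw, pc.hdinv γ _ hw2 hw3, hnc]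
      rw [if_pos ((hmemim γ c _).2 hdc), if_pos hdc]
    · rw [htvim, himw, pc.hdinv γ _ hw2 hw3, hnc]
      rw [if_neg (fun hh => hdc ((hmemim γ c _).1 hh)), if_neg hdc]

end PC

section Nu

variable {V' : Type*}

theorem nbhd_mono_right {K L₁ L₂ : Cplx V'} (h : L₁.faces ⊆ L₂.faces) :
    (nbhd K L₁).faces ⊆ (nbhd K L₂).faces := by
  rintro σ ⟨v, hv, hins⟩
  exact ⟨v, verts_mono h hv, hins⟩

/-- The key doubling step: the second neighborhood of `Sd L` in `Sd K` is contained in the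
subdivision of the neighborhood of `L` in `K`. -/
theorem nu2_sub_sd_nu (K₀ L₀ : Cplx V') :
    (nbhd (sd K₀) (nbhd (sd K₀) (sd L₀))).faces ⊆ (sd (nbhd K₀ L₀)).faces := by
  rintro c ⟨w, hw, hcw⟩
  obtain ⟨v, hv, hvw⟩ := hw
  have hvL : v ∈ facePoset L₀ := by
    have h2 : {v} ∈ (sd L₀).faces := hv
    exact h2.2.1 v rfl
  have hwK : w ∈ facePoset K₀ := hvw.2.1 w (Set.mem_insert_of_mem _ rfl)
  have hvwc : v ⊆ w ∨ w ⊆ v :=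
    PC.chain_comp hvw.2.2 (Set.mem_insert _ _) (Set.mem_insert_of_mem _ rfl)
  have hcK : ∀ σ ∈ c, σ ∈ facePoset K₀ := fun σ hσ => hcw.2.1 σ (Set.mem_insert_of_mem _ hσ)
  have hcwc : ∀ σ ∈ c, σ ⊆ w ∨ w ⊆ σ := fun σ hσ =>
    PC.chain_comp hcw.2.2 (Set.mem_insert_of_mem _ hσ) (Set.mem_insert _ _)
  have hkey : ∀ σ ∈ c, σ ∈ facePoset (nbhd K₀ L₀) := by
    intro σ hσ
    obtain ⟨hσK, hσne⟩ := hcK σ hσ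
    obtain ⟨hwKf, hwne⟩ := hwK
    obtain ⟨hvLf, hvne⟩ := hvL
    have hmain : ∃ u ∈ L₀.verts, insert u σ ∈ K₀.faces := by
      rcases hvwc with hvw2 | hvw2
      · obtain ⟨u, hu⟩ := hvne
        have huL : u ∈ L₀.verts := L₀.down_closed v hvLf {u} (by simpa using hu)
        rcases hcwc σ hσ with hσw | hσw
        · exact ⟨u, huL, K₀.down_closed w hwKf _ (Set.insert_subset (hvw2 hu) hσw)⟩
        · refine ⟨u, huL, ?_⟩
          rw [Set.insert_eq_of_mem (hσw (hvw2 hu))]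
          exact hσK
      · obtain ⟨u, hu⟩ := hwne
        have huL : u ∈ L₀.verts := L₀.down_closed v hvLf {u} (by simpa using hvw2 hu)
        rcases hcwc σ hσ with hσw | hσw
        · exact ⟨u, huL, K₀.down_closed w hwKf _ (Set.insert_subset hu hσw)⟩
        · refine ⟨u, huL, ?_⟩
          rw [Set.insert_eq_of_mem (hσw hu)]
          exact hσK
    obtain ⟨u, huL, hins⟩ := hmain
    exact ⟨⟨u, huL, hins⟩, hσne⟩
  exact ⟨hcw.1.subset (Set.subset_insert _ _), hkey,
    hcw.2.2.mono (Set.subset_insert _ _)⟩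

/-- Iterated doubling. -/
theorem nu_double (K₀ L₀ : Cplx V') :
    ∀ s : ℕ, (nbhdIter (sd K₀) (sd L₀) (2 * (s + 1))).faces ⊆
      (sd (nbhdIter K₀ L₀ (s + 1))).faces := by
  intro s
  induction s with
  | zero => exact nu2_sub_sd_nu K₀ L₀
  | succ s ih =>
      have hidx : 2 * (s + 1 + 1) = 2 * (s + 1) + 2 := by ring
      rw [hidx]
      intro c hc
      have h1 : c ∈ (nbhd (sd K₀) (nbhd (sd K₀) (sd (nbhdIter K₀ L₀ (s + 1))))).faces :=
        nbhd_mono_right (nbhd_mono_right ih) hc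
      exact nu2_sub_sd_nu K₀ (nbhdIter K₀ L₀ (s + 1)) h1

end Nu

section Base

variable {Γ : Type*} [Group Γ] {V : Type u}

theorem sd_action {b : Γ → V → V} {K : Cplx V}
    (hKinv : ∀ γ : Γ, ∀ σ ∈ K.faces, b γ '' σ ∈ K.faces) :
    ∀ γ : Γ, ∀ c ∈ (sd K).faces, (fun τ => b γ '' τ) '' c ∈ (sd K).faces := by
  intro γ c hc
  refine ⟨hc.1.image _, ?_, ?_⟩
  · rintro x ⟨τ, hτ, rfl⟩
    obtain ⟨hτK, hτne⟩ := hc.2.1 τ hτ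
    exact ⟨hKinv γ τ hτK, hτne.image _⟩
  · rintro x ⟨τ, hτ, rfl⟩ y ⟨τ', hτ', rfl⟩ hne
    have hττ : τ ≠ τ' := fun hh => hne (by rw [hh])
    rcases hc.2.2 hτ hτ' hττ with hle | hle
    · exact Or.inl (Set.image_mono hle)
    · exact Or.inr (Set.image_mono hle)

/-- The base case: the collapse data at the second subdivision level. -/
theorem base_inv (a : Γ → V → V) (K L : Cplx V) (ha : IsCplxAction Γ a K)
    (haL : ∀ γ : Γ, ∀ σ ∈ L.faces, (a γ) '' σ ∈ L.faces)
    (hfin : K.verts.Finite) (hLK : L.faces ⊆ K.faces) :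
    ∃ P R : Set (Set (Set V)),
      Nonempty (PC Γ (actIter a 1) P R) ∧
      (chainCplx P).faces ⊆ (sdIter K 2).faces ∧
      sdIter L 2 = chainCplx R ∧
      (nbhdIter (sdIter K 2) (sdIter L 2) 1).faces ⊆ (chainCplx P).faces := by
  have hga : GoodAct a := ⟨ha.1, ha.2.1⟩
  set P : Set (Set (Set V)) :=
    {σ | σ ∈ facePoset (sd K) ∧ (σ ∩ facePoset L).Nonempty} with hP
  set R : Set (Set (Set V)) := facePoset (sd L) with hR
  have hRP : R ⊆ P := by
    intro σ hσ
    obtain ⟨x, hx⟩ := hσ.2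
    exact ⟨facePoset_mono (sd_mono hLK) hσ, ⟨x, hx, hσ.1.2.1 x hx⟩⟩
  have hdR : ∀ σ ∈ P, σ ∩ facePoset L ∈ R := by
    intro σ hσ
    refine ⟨⟨hσ.1.1.1.subset Set.inter_subset_left, fun x hx => hx.2,
      hσ.1.1.2.2.mono Set.inter_subset_left⟩, hσ.2⟩
  -- invariance of the face posets
  have hFL : ∀ (γ : Γ) (x : Set V), x ∈ facePoset L → (a γ) '' x ∈ facePoset L := by
    intro γ x hx
    exact ⟨haL γ x hx.1, hx.2.image _⟩
  have hFLiff : ∀ (γ : Γ) (x : Set V), (a γ) '' x ∈ facePoset L ↔ x ∈ facePoset L := by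
    intro γ x
    exact ⟨fun h => hga.image.inv_mem (fun γ' y hy => hFL γ' y hy) h, hFL γ x⟩
  have hsdK : ∀ (γ : Γ), ∀ σ ∈ (sd K).faces, (actIter a 1 γ) '' σ ∈ (sd K).faces :=
    sd_action (fun γ σ hσ => ha.2.2 γ σ hσ)
  have hsdL : ∀ (γ : Γ), ∀ σ ∈ (sd L).faces, (actIter a 1 γ) '' σ ∈ (sd L).faces :=
    sd_action haL
  have hinter : ∀ (γ : Γ) (σ : Set (Set V)),
      (actIter a 1 γ '' σ) ∩ facePoset L = actIter a 1 γ '' (σ ∩ facePoset L) := by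
    intro γ σ
    ext x
    constructor
    · rintro ⟨⟨y, hy, rfl⟩, hxL⟩
      exact ⟨y, ⟨hy, (hFLiff γ y).1 hxL⟩, rfl⟩
    · rintro ⟨y, ⟨hy, hyL⟩, rfl⟩
      exact ⟨⟨y, hy, rfl⟩, hFL γ y hyL⟩
  refine ⟨P, R, ⟨{
      d := fun σ => σ ∩ facePoset L
      pi := Set.ncard
      hRP := hRP
      hfinP := (sd_faces_finite (faces_finite_of_verts hfin)).subset
        (fun σ hσ => hσ.1.1)
      hdP := fun σ hσ _ => hRP (hdR σ hσ)
      hdne := fun σ hσ hσR heq => hσR (heq ▸ hdR σ hσ)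
      hdpi := fun σ hσ _ hdRR => absurd (hdR σ hσ) hdRR
      hcomp := ?_
      hinj := ?_
      hge := actIter_good hga 1
      hPinv := ?_
      hRinv := ?_
      hdinv := ?_
      hpinv := ?_ }⟩, ?_, ?_, ?_⟩
  -- hcomp
  · intro σ hσP hσR τ hτP hsub hpi
    rcases hsub with h | h
    · exact Or.inl (Set.inter_subset_left.trans h)
    · by_cases hτR : τ ∈ R
      · exact Or.inr (fun x hx => ⟨h hx, hτR.1.2.1 x hx⟩)
      · have hles := hpi hτR
        have heq : τ = σ := Set.eq_of_subset_of_ncard_le h hles hσP.1.1.1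
        refine Or.inl ?_
        rw [heq]
        exact Set.inter_subset_left
  -- hinj
  · intro σ hσP hσR τ hτP hτR hsub hpieq
    rcases hsub with h | h
    · exact Set.eq_of_subset_of_ncard_le h (le_of_eq hpieq.symm) hτP.1.1.1
    · exact (Set.eq_of_subset_of_ncard_le h (le_of_eq hpieq) hσP.1.1.1).symm
  -- hPinv
  · intro γ σ hσ
    refine ⟨⟨hsdK γ σ hσ.1.1, hσ.1.2.image _⟩, ?_⟩
    refine (congrArg Set.Nonempty (hinter γ σ)).mpr ?_
    exact hσ.2.image _
  -- hRinv
  · intro γ σ hσ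
    exact ⟨hsdL γ σ hσ.1, hσ.2.image _⟩
  -- hdinv
  · intro γ σ _ _
    exact hinter γ σ
  -- hpinv
  · intro γ σ _ _
    exact Set.ncard_image_of_injective σ ((actIter_good hga 1).injective γ)
  -- chainCplx P ⊆ Sd² K
  · intro c hc
    exact ⟨hc.1, fun σ hσ => (hc.2.1 hσ).1, hc.2.2⟩
  -- Sd² L = chainCplx R
  · exact sd_eq_chainCplx (sd L)
  -- first neighborhood is inside chainCplx P
  · rintro c ⟨v, hv, hcv⟩
    have hv2 : v ∈ facePoset (sd L) := by
      have h2 : {v} ∈ (sd (sd L)).faces := hv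
      exact h2.2.1 v rfl
    refine ⟨hcv.1.subset (Set.subset_insert _ _), ?_, hcv.2.2.mono (Set.subset_insert _ _)⟩
    intro σ hσ
    refine ⟨hcv.2.1 σ (Set.mem_insert_of_mem _ hσ), ?_⟩
    rcases PC.chain_comp hcv.2.2 (Set.mem_insert_of_mem _ hσ) (Set.mem_insert _ _) with
      hcom | hcom
    · obtain ⟨x, hx⟩ := (hcv.2.1 σ (Set.mem_insert_of_mem _ hσ)).2
      exact ⟨x, hx, hv2.1.2.1 x (hcom hx)⟩
    · obtain ⟨x, hx⟩ := hv2.2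
      exact ⟨x, hcom hx, hv2.1.2.1 x hx⟩

end Base

section Main

variable {Γ : Type*} [Group Γ] {V : Type u}

theorem main_inv (a : Γ → V → V) (K L : Cplx V) (ha : IsCplxAction Γ a K)
    (haL : ∀ γ : Γ, ∀ σ ∈ L.faces, (a γ) '' σ ∈ L.faces)
    (hfin : K.verts.Finite) (hLK : L.faces ⊆ K.faces) :
    ∀ j : ℕ, ∃ P R : Set (Set (IterT V (j + 1))),
      Nonempty (PC Γ (actIter a (j + 1)) P R) ∧
      (chainCplx P).faces ⊆ (sdIter K (j + 2)).faces ∧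
      sdIter L (j + 2) = chainCplx R ∧
      (nbhdIter (sdIter K (j + 2)) (sdIter L (j + 2)) (2 ^ j)).faces ⊆
        (chainCplx P).faces := by
  intro j
  induction j with
  | zero => exact base_inv a K L ha haL hfin hLK
  | succ j ih =>
      obtain ⟨P, R, ⟨pc⟩, hPK, hLR, hnu⟩ := ih
      refine ⟨neChains P, neChains R, ⟨pc.sd⟩, ?_, ?_, ?_⟩
      · show (chainCplx (neChains P)).faces ⊆ (sd (sdIter K (j + 2))).faces
        rw [← sd_chainCplx]
        exact sd_mono hPK
      · show sd (sdIter L (j + 2)) = chainCplx (neChains R)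
        rw [hLR]
        exact sd_chainCplx R
      · obtain ⟨s, hs⟩ : ∃ s : ℕ, 2 ^ j = s + 1 :=
          ⟨2 ^ j - 1, by
            have : 1 ≤ 2 ^ j := Nat.one_le_two_pow
            omega⟩
        have hidx : 2 ^ (j + 1) = 2 * (s + 1) := by
          rw [pow_succ, hs]
          ring
        rw [hidx]
        show _ ⊆ (chainCplx (neChains P)).faces
        rw [← sd_chainCplx]
        intro c hc
        have h1 := nu_double (sdIter K (j + 2)) (sdIter L (j + 2)) s hc
        rw [← hs] at h1
        exact sd_mono hnu h1
end Main

theorem sdIter_isNDRPair' {Γ : Type*} {V : Type u} [Group Γ]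
    (a : Γ → V → V) (K L : Cplx V) (ha : IsCplxAction Γ a K)
    (haL : ∀ γ : Γ, ∀ σ ∈ L.faces, (a γ) '' σ ∈ L.faces)
    (hfin : K.verts.Finite) (hLK : L.faces ⊆ K.faces)
    (r : ℕ) (hr : 2 ≤ r) :
    IsNDRPair Γ (actIter a r) (sdIter K r) (sdIter L r) (2 ^ (r - 2)) := by
  obtain ⟨j, rfl⟩ : ∃ j, r = j + 2 := ⟨r - 2, by omega⟩
  obtain ⟨P, R, ⟨pc⟩, hPK, hLR, hnu⟩ := main_inv a K L ha haL hfin hLK j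
  refine ⟨chainCplx P, hPK, ?_, ?_, ?_, ?_⟩
  · rw [hLR]
    exact chainCplx_mono pc.hRP
  · intro γ σ hσ
    refine ⟨hσ.1.image _, ?_, ?_⟩
    · rintro x ⟨τ, hτ, rfl⟩
      exact pc.hPinv γ τ (hσ.2.1 hτ)
    · rintro x ⟨τ, hτ, rfl⟩ y ⟨τ', hτ', rfl⟩ hne
      have hττ : τ ≠ τ' := fun hh => hne (by rw [hh])
      rcases hσ.2.2 hτ hτ' hττ with hle | hle
      · exact Or.inl (Set.image_mono hle)
      · exact Or.inr (Set.image_mono hle)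
  · have hj : j + 2 - 2 = j := by omega
    rw [hj]
    exact hnu
  · rw [hLR]
    exact pc.collapse
/-- Let Γ be a finite group and (K,L) a pair of finite Γ-simplicial complexes.
Then for every integer r ≥ 2, the pair (Sd^r(K), Sd^r(L)) is a 2^{r-2}-NDR pair. -/
theorem sdIter_isNDRPair {Γ : Type*} {V : Type u} [Group Γ] [Finite Γ]
    (a : Γ → V → V) (K L : Cplx V) (ha : IsCplxAction Γ a K)
    (haL : ∀ γ : Γ, ∀ σ ∈ L.faces, (a γ) '' σ ∈ L.faces)
    (hfin : K.verts.Finite) (hLK : L.faces ⊆ K.faces)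
    (r : ℕ) (hr : 2 ≤ r) :
    IsNDRPair Γ (actIter a r) (sdIter K r) (sdIter L r) (2 ^ (r - 2)) := by
  exact sdIter_isNDRPair' a K L ha haL hfin hLK r hr
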